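/- Let q = p^n ≡ 3 (mod 4) and u ∈ F_q* with χ(u+1) = χ(1-u) = ±1 and u ∉ {1,-1} (i.e., χ(u+1) ≠ χ(u-1), u ≠ 0). Let a, b ∈ F_q* satisfy χ(a²b² - 4ab + 4u²) = 1, and let s denote either square root of a²b² - 4ab + 4u². Then χ(2u² - ab + us) = -1 and χ(2u² - ab - us) = -1 hold simultaneously if and only if χ(2ab(1 + √(1-u²)) - 4u²) = 1, where √(1-u²) is a fixed square root of the square element 1 - u². -/

import Mathlib

open Finset
open scoped Classical

/-- The quadratic character of a finite field, valued in ℤ. -/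
noncomputable def qchar {F : Type*} [Field F] (x : F) : ℤ :=
  if x = 0 then 0 else if IsSquare x then 1 else -1

/-!
Put A = 2u² - ab + us, B = 2u² - ab - us, C = 2ab(1 + v) - 4u² and D = ab(1 + v) - 2u² - us.
Using s² = a²b² - 4ab + 4u² and v² = 1 - u² one checks A·B = (abv)² and -(A·C) = D².
Hence χ(A) = χ(B), and since χ(-1) = -1 for q ≡ 3 (mod 4), χ(C) = -χ(A); the hypotheses
u ≠ 0, ±1, ab ≠ 0 and s ≠ 0 make all of A, B, C nonzero.
-/

section QuadraticCharacter

variable {F : Type*} [Field F] [Fintype F]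

theorem qchar_eq_quadraticChar (x : F) : qchar x = quadraticChar F x := by
  simp only [qchar, quadraticChar_apply, quadraticCharFun]
  split_ifs <;> rfl

theorem qchar_mul (x y : F) : qchar (x * y) = qchar x * qchar y := by
  simp only [qchar_eq_quadraticChar, map_mul]

theorem qchar_sq {x : F} (hx : x ≠ 0) : qchar (x ^ 2) = 1 := by
  rw [qchar_eq_quadraticChar, quadraticChar_sq_one' hx]

theorem qchar_eq_one_or_neg_one {x : F} (hx : x ≠ 0) : qchar x = 1 ∨ qchar x = -1 := by
  simp only [qchar_eq_quadraticChar]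
  exact_mod_cast quadraticChar_dichotomy hx

theorem qchar_neg_one (hq : Fintype.card F % 4 = 3) : qchar (-1 : F) = -1 := by
  have h : ¬IsSquare (-1 : F) := by
    rw [FiniteField.isSquare_neg_one_iff]
    omega
  simp [qchar, h]

theorem two_ne_zero_of_card_mod_four_eq_three (hq : Fintype.card F % 4 = 3) : (2 : F) ≠ 0 :=
  Ring.two_ne_zero (by rw [Ne, FiniteField.even_card_iff_char_two]; omega)

theorem qchar_eq_neg_one_and_eq_neg_one_iff (hq : Fintype.card F % 4 = 3) {A B C x y : F}
    (hx : x ≠ 0) (hC : C ≠ 0) (hAB : A * B = x ^ 2) (hAC : -(A * C) = y ^ 2) :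
    (qchar A = -1 ∧ qchar B = -1) ↔ qchar C = 1 := by
  have hA : A ≠ 0 := left_ne_zero_of_mul (hAB ▸ pow_ne_zero 2 hx)
  have hy : y ≠ 0 := by
    rintro rfl
    exact mul_ne_zero hA hC (by simpa using hAC)
  have hχAB : qchar A * qchar B = 1 := by rw [← qchar_mul, hAB, qchar_sq hx]
  have hχAC : qchar A * qchar C = -1 := by
    have h := qchar_sq hy
    rwa [← hAC, neg_eq_neg_one_mul, qchar_mul, qchar_neg_one hq, qchar_mul, neg_one_mul,
      neg_eq_iff_eq_neg] at h
  rcases qchar_eq_one_or_neg_one hA with h | h <;> rw [h] at hχAB hχAC ⊢ <;> omega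

end QuadraticCharacter

theorem stmt_13_general {F : Type*} [Field F] [Fintype F]
    (hq : Fintype.card F % 4 = 3) (u : F) (hu0 : u ≠ 0)
    (hu1 : u ≠ 1) (hum1 : u ≠ -1)
    (a b : F) (ha : a ≠ 0) (hb : b ≠ 0)
    (s : F) (hs : s ^ 2 = a ^ 2 * b ^ 2 - 4 * a * b + 4 * u ^ 2)
    (hsq : qchar (a ^ 2 * b ^ 2 - 4 * a * b + 4 * u ^ 2) = 1)
    (v : F) (hv : v ^ 2 = 1 - u ^ 2) :
    (qchar (2 * u ^ 2 - a * b + u * s) = -1 ∧ qchar (2 * u ^ 2 - a * b - u * s) = -1) ↔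
      qchar (2 * a * b * (1 + v) - 4 * u ^ 2) = 1 := by
  have hv0 : v ≠ 0 := by
    rintro rfl
    have h : (1 - u) * (1 + u) = 0 := by linear_combination -hv
    rcases mul_eq_zero.mp h with h | h
    · exact hu1 (by linear_combination -h)
    · exact hum1 (by linear_combination h)
  have hs0 : s ≠ 0 := by
    rintro rfl
    simp [← hs, qchar] at hsq
  have hAC : -((2 * u ^ 2 - a * b + u * s) * (2 * a * b * (1 + v) - 4 * u ^ 2)) =
      (a * b * (1 + v) - 2 * u ^ 2 - u * s) ^ 2 := by
    linear_combination -(u ^ 2 * hs) - a ^ 2 * b ^ 2 * hv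
  have hC : 2 * a * b * (1 + v) - 4 * u ^ 2 ≠ 0 := by
    intro hC
    have hD : a * b * (1 + v) - 2 * u ^ 2 - u * s = 0 :=
      pow_eq_zero_iff two_ne_zero |>.mp (by rw [← hAC, hC, mul_zero, neg_zero])
    refine mul_ne_zero (two_ne_zero_of_card_mod_four_eq_three hq) (mul_ne_zero hu0 hs0) ?_
    linear_combination hC - 2 * hD
  refine qchar_eq_neg_one_and_eq_neg_one_iff hq (mul_ne_zero (mul_ne_zero ha hb) hv0) hC ?_ hAC
  linear_combination -(u ^ 2 * hs) - a ^ 2 * b ^ 2 * hv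

theorem stmt_13 {F : Type*} [Field F] [Fintype F]
    (hq : Fintype.card F % 4 = 3) (u : F) (hu0 : u ≠ 0)
    (hu : qchar (u + 1) = qchar (1 - u)) (hune : qchar (u + 1) ≠ 0)
    (hu1 : u ≠ 1) (hum1 : u ≠ -1)
    (a b : F) (ha : a ≠ 0) (hb : b ≠ 0)
    (s : F) (hs : s ^ 2 = a ^ 2 * b ^ 2 - 4 * a * b + 4 * u ^ 2)
    (hsq : qchar (a ^ 2 * b ^ 2 - 4 * a * b + 4 * u ^ 2) = 1)
    (v : F) (hv : v ^ 2 = 1 - u ^ 2) :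
    (qchar (2 * u ^ 2 - a * b + u * s) = -1 ∧ qchar (2 * u ^ 2 - a * b - u * s) = -1) ↔
      qchar (2 * a * b * (1 + v) - 4 * u ^ 2) = 1 :=
  stmt_13_general hq u hu0 hu1 hum1 a b ha hb s hs hsq v hv
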